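/- arXiv:2004.11930 — 3 statements merged into one kernel-verified Lean document; each statement's English description precedes it below -/
import Mathlib

section
/- Let k \ge 3 and n \ge k. If G is an n-vertex graph with no copy of \widehat{P}_k (the suspension of the path with k edges), then t(G) \le ((k-1)/12) n^2 + ((k-1)^2/12) n. -/
/-!
Write `t`, `e`, `n` for the numbers of triangles, edges and vertices. A copy of `K_1 ∨ P_k` is a
vertex together with a path of `k` edges in its neighbourhood, so by the Erdős–Gallai theorem the
neighbourhood of `v` spans at most `(k - 1) d(v) / 2` edges; summing over `v` gives
`3 t ≤ (k - 1) e`. On the other hand every edge `bc` lies in at least `d(b) + d(c) - n`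
triangles, which together with Cauchy–Schwarz gives the Nordhaus–Stewart bound
`3 n t ≥ e (4 e - n²)`. The two bounds force `4 e ≤ n² + (k - 1) n`, hence
`t ≤ (k - 1) e / 3 ≤ (k - 1) (n² + (k - 1) n) / 12`.

Erdős–Gallai goes by induction on the vertex set: delete a vertex of degree `< k / 2`, or split
off a union of components. What is left is connected, has more than `k` vertices and minimum
degree `≥ k / 2`; there a longest path closes up into a cycle by Pósa's crossing argument, and
connectivity then extends it, so it has `k` edges after all.
-/

open SimpleGraph

/-- `G` contains a copy of `H` (a subgraph isomorphic to `H`). -/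
def containsCopy {W V : Type*} (H : SimpleGraph W) (G : SimpleGraph V) : Prop :=
  ∃ f : H →g G, Function.Injective f

/-- The number of triangles of `G`. -/
noncomputable def triCount {V : Type*} (G : SimpleGraph V) : ℕ :=
  {s : Finset V | G.IsNClique 3 s}.ncard

/-- The number of edges of `G`. -/
noncomputable def edgeCount {V : Type*} (G : SimpleGraph V) : ℕ :=
  G.edgeSet.ncard

/-- The suspension `K_1 ∨ H` of a graph `H`: a new vertex (`none`) joined to all
vertices of `H`. -/
def susp {W : Type*} (H : SimpleGraph W) : SimpleGraph (Option W) where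
  Adj a b :=
    match a, b with
    | some x, some y => H.Adj x y
    | some _, none => True
    | none, some _ => True
    | none, none => False
  symm := by
    constructor
    rintro (_ | x) (_ | y) h
    · exact h
    · trivial
    · trivial
    · exact h.symm
  loopless := by
    constructor
    rintro (_ | x) h
    · exact h
    · exact H.loopless.irrefl x h

/-- The Turán number: maximum number of edges of an `H`-free graph on `n` vertices. -/
noncomputable def exNum (n : ℕ) {W : Type*} (H : SimpleGraph W) : ℕ :=
  sSup {m | ∃ G : SimpleGraph (Fin n), ¬ containsCopy H G ∧ edgeCount G = m}

/-- The codegree of the pair `a, b`: number of common neighbours. -/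
noncomputable def codeg {V : Type*} (G : SimpleGraph V) (a b : V) : ℕ :=
  (G.neighborSet a ∩ G.neighborSet b).ncard

open Finset

namespace SimpleGraph

variable {V : Type*} {G : SimpleGraph V}

/-- Only `f 0, …, f k` matter: paths are sequences on `ℕ`, so that reversing, rotating and
extending them is index arithmetic. -/
structure IsPathIn (G : SimpleGraph V) (s : Finset V) (k : ℕ) (f : ℕ → V) : Prop where
  mem : ∀ i ≤ k, f i ∈ s
  inj : ∀ i ≤ k, ∀ j ≤ k, f i = f j → i = j
  adj : ∀ i < k, G.Adj (f i) (f (i + 1))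

variable (G) in
def degreeIn [DecidableRel G.Adj] (s : Finset V) (v : V) : ℕ :=
  #{w ∈ s | G.Adj v w}

namespace IsPathIn

variable {s t : Finset V} {l : ℕ} {f : ℕ → V}

lemma mono (hf : G.IsPathIn s l f) (hst : s ⊆ t) : G.IsPathIn t l f :=
  ⟨fun i hi => hst (hf.mem i hi), hf.inj, hf.adj⟩

lemma reverse (hf : G.IsPathIn s l f) : G.IsPathIn s l (fun i => f (l - i)) where
  mem i _ := hf.mem _ (by omega)
  inj i hi j hj h := by have := hf.inj _ (by omega) _ (by omega) h; omega
  adj i hi := by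
    have := (hf.adj (l - (i + 1)) (by omega)).symm
    rwa [show l - (i + 1) + 1 = l - i by omega] at this

lemma cons (hf : G.IsPathIn s l f) {y : V} (hy : y ∈ s) (hadj : G.Adj y (f 0))
    (hnew : ∀ i ≤ l, f i ≠ y) :
    G.IsPathIn s (l + 1) (fun | 0 => y | i + 1 => f i) where
  mem
    | 0, _ => hy
    | i + 1, hi => hf.mem i (by omega)
  inj
    | 0, _, 0, _, _ => rfl
    | 0, _, j + 1, hj, h => absurd h.symm (hnew j (by omega))
    | i + 1, hi, 0, _, h => absurd h (hnew i (by omega))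
    | i + 1, hi, j + 1, hj, h => by rw [hf.inj i (by omega) j (by omega) h]
  adj
    | 0, _ => hadj
    | i + 1, hi => hf.adj i (by omega)

lemma exists_eq_of_adj_head (hf : G.IsPathIn s l f) (hmax : ∀ g, ¬ G.IsPathIn s (l + 1) g)
    {y : V} (hy : y ∈ s) (hadj : G.Adj (f 0) y) : ∃ p < l, f (p + 1) = y := by
  by_contra! hno
  refine hmax _ (hf.cons hy hadj.symm fun i hi h => ?_)
  rcases i with _ | p
  · exact G.loopless.irrefl _ (h ▸ hadj)
  · exact hno p (by omega) h

lemma exists_eq_of_adj_last (hf : G.IsPathIn s l f) (hmax : ∀ g, ¬ G.IsPathIn s (l + 1) g)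
    {y : V} (hy : y ∈ s) (hadj : G.Adj (f l) y) : ∃ p < l, f p = y := by
  obtain ⟨p, hp, rfl⟩ := hf.reverse.exists_eq_of_adj_head hmax hy (by simpa using hadj)
  exact ⟨l - (p + 1), by omega, rfl⟩

lemma rotate (hc : G.IsPathIn s l f) (hclose : G.Adj (f l) (f 0)) (q : ℕ) :
    G.IsPathIn s l (fun j => f ((q + j) % (l + 1))) where
  mem j _ := hc.mem _ (Nat.lt_succ_iff.1 (Nat.mod_lt _ l.succ_pos))
  inj i hi j hj h := by
    have hmod := hc.inj _ (Nat.lt_succ_iff.1 (Nat.mod_lt _ l.succ_pos)) _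
      (Nat.lt_succ_iff.1 (Nat.mod_lt _ l.succ_pos)) h
    have := Nat.ModEq.add_left_cancel' q hmod
    rwa [Nat.ModEq, Nat.mod_eq_of_lt (by omega), Nat.mod_eq_of_lt (by omega)] at this
  adj i _ := by
    have hr : (q + i) % (l + 1) < l + 1 := Nat.mod_lt _ l.succ_pos
    rw [← add_assoc, ← Nat.mod_add_mod (q + i) (l + 1) 1]
    rcases (Nat.lt_succ_iff.1 hr).lt_or_eq with hlt | heq
    · rw [Nat.mod_eq_of_lt (by omega : (q + i) % (l + 1) + 1 < l + 1)]
      exact hc.adj _ hlt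
    · rw [heq, Nat.mod_self]
      exact hclose

/-- A path `f 0, …, f l` with chords `f 0 f (i + 1)` and `f i f l` closes up into the cycle
`f 0, …, f i, f l, f (l - 1), …, f (i + 1)`. -/
lemma exists_cycle_of_crossover (hf : G.IsPathIn s l f) {i : ℕ} (hi : i < l)
    (h0 : G.Adj (f 0) (f (i + 1))) (hl : G.Adj (f i) (f l)) :
    ∃ c, G.IsPathIn s l c ∧ G.Adj (c l) (c 0) := by
  refine ⟨fun j => if j ≤ i then f j else f (l + i + 1 - j),
    ⟨fun j hj => ?_, fun a ha b hb hab => ?_, fun j hj => ?_⟩, ?_⟩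
  · split_ifs
    exacts [hf.mem j hj, hf.mem _ (by omega)]
  · split_ifs at hab
    · exact hf.inj _ (by omega) _ (by omega) hab
    · have := hf.inj _ (by omega) _ (by omega) hab; omega
    · have := hf.inj _ (by omega) _ (by omega) hab; omega
    · have := hf.inj _ (by omega) _ (by omega) hab; omega
  · rcases lt_trichotomy j i with hji | rfl | hij
    · rw [if_pos hji.le, if_pos (show j + 1 ≤ i by omega)]
      exact hf.adj j (by omega)
    · rw [if_pos le_rfl, if_neg (by omega), show l + j + 1 - (j + 1) = l by omega]
      exact hl
    · rw [if_neg (by omega), if_neg (by omega), show l + i + 1 - j = l + i - j + 1 by omega,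
        show l + i + 1 - (j + 1) = l + i - j by omega]
      exact (hf.adj _ (by omega)).symm
  · beta_reduce
    rw [if_neg (by omega), if_pos (Nat.zero_le i), show l + i + 1 - l = i + 1 by omega]
    exact h0.symm

lemma exists_isPathIn_succ_of_cycle (hc : G.IsPathIn s l f) (hclose : G.Adj (f l) (f 0))
    {y : V} (hy : y ∈ s) (hnew : ∀ i ≤ l, f i ≠ y) {q : ℕ} (hq : q ≤ l) (hadj : G.Adj y (f q)) :
    ∃ g, G.IsPathIn s (l + 1) g := by
  refine ⟨_, (hc.rotate hclose q).cons hy ?_ fun j _ => hnew _ ?_⟩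
  · simpa [Nat.mod_eq_of_lt (Nat.lt_succ_of_le hq)] using hadj
  · exact Nat.lt_succ_iff.1 (Nat.mod_lt _ l.succ_pos)

/-- Pósa's pigeonhole: the indices `i < l` with `f 0 ~ f (i + 1)`, and those with `f i ~ f l`,
are too many to be disjoint. -/
lemma exists_crossover [DecidableRel G.Adj] (hf : G.IsPathIn s l f)
    (hmax : ∀ g, ¬ G.IsPathIn s (l + 1) g)
    (hdeg : l < G.degreeIn s (f 0) + G.degreeIn s (f l)) :
    ∃ i < l, G.Adj (f 0) (f (i + 1)) ∧ G.Adj (f i) (f l) := by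
  classical
  set S := {i ∈ range l | G.Adj (f 0) (f (i + 1))}
  set T := {i ∈ range l | G.Adj (f i) (f l)}
  have hS : G.degreeIn s (f 0) ≤ #S := by
    refine (card_le_card fun y hy => ?_).trans (card_image_le (f := fun i => f (i + 1)))
    obtain ⟨hys, hadj⟩ := mem_filter.1 hy
    obtain ⟨p, hp, rfl⟩ := hf.exists_eq_of_adj_head hmax hys hadj
    exact mem_image.2 ⟨p, mem_filter.2 ⟨mem_range.2 hp, hadj⟩, rfl⟩
  have hT : G.degreeIn s (f l) ≤ #T := by
    refine (card_le_card fun y hy => ?_).trans (card_image_le (f := f))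
    obtain ⟨hys, hadj⟩ := mem_filter.1 hy
    obtain ⟨p, hp, rfl⟩ := hf.exists_eq_of_adj_last hmax hys hadj
    exact mem_image.2 ⟨p, mem_filter.2 ⟨mem_range.2 hp, hadj.symm⟩, rfl⟩
  obtain ⟨i, hi⟩ := inter_nonempty_of_card_lt_card_add_card (t := S) (u := T)
    (filter_subset _ _) (filter_subset _ _) (by rw [card_range]; omega)
  obtain ⟨hiS, hiT⟩ := mem_inter.1 hi
  exact ⟨i, mem_range.1 (mem_filter.1 hiS).1, (mem_filter.1 hiS).2, (mem_filter.1 hiT).2⟩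

lemma containsCopy_susp {v : V} [Fintype (G.neighborSet v)] {k : ℕ} {f : ℕ → V}
    (hf : G.IsPathIn (G.neighborFinset v) k f) : containsCopy (susp (pathGraph (k + 1))) G := by
  have hmem (i : Fin (k + 1)) : G.Adj v (f i) := (mem_neighborFinset _ _ _).1 (hf.mem i (by omega))
  refine ⟨⟨fun o => o.elim v (fun i => f i), ?_⟩, ?_⟩
  · rintro (_ | i) (_ | j) h
    · exact h.elim
    · exact hmem j
    · exact (hmem i).symm
    · rcases pathGraph_adj.1 h with h | h
      · simpa [← h] using hf.adj i (by omega)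
      · simpa [← h] using (hf.adj j (by omega)).symm
  · rintro (_ | i) (_ | j) h
    · rfl
    · exact absurd h (hmem j).ne
    · exact absurd h (hmem i).ne'
    · exact congrArg some (Fin.ext (hf.inj i (by omega) j (by omega) h))

end IsPathIn

variable [DecidableRel G.Adj]

lemma degreeIn_lt_card {s : Finset V} {v : V} (hv : v ∈ s) : G.degreeIn s v < #s :=
  card_lt_card (filter_ssubset.2 ⟨v, hv, G.loopless.irrefl v⟩)

lemma sum_degreeIn_eq_add_of_closed [DecidableEq V] {s C : Finset V} (hCs : C ⊆ s)
    (hcl : ∀ a ∈ C, ∀ b ∈ s, G.Adj a b → b ∈ C) :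
    ∑ v ∈ s, G.degreeIn s v = ∑ v ∈ C, G.degreeIn C v + ∑ v ∈ s \ C, G.degreeIn (s \ C) v := by
  rw [← sum_sdiff hCs, add_comm]
  congr 1 <;> refine sum_congr rfl fun v hv => congrArg card (Finset.ext fun w => ?_)
  · simp only [mem_filter]
    exact ⟨fun ⟨hw, hvw⟩ => ⟨hcl v hv w hw hvw, hvw⟩, fun ⟨hw, hvw⟩ => ⟨hCs hw, hvw⟩⟩
  · simp only [mem_filter, mem_sdiff]
    exact ⟨fun ⟨hw, hvw⟩ => ⟨⟨hw, fun hwC => (mem_sdiff.1 hv).2 (hcl w hwC v (mem_sdiff.1 hv).1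
      hvw.symm)⟩, hvw⟩, fun ⟨hw, hvw⟩ => ⟨hw.1, hvw⟩⟩

lemma sum_degreeIn_erase [DecidableEq V] {s : Finset V} {v : V} (hv : v ∈ s) :
    ∑ w ∈ s, G.degreeIn s w = ∑ w ∈ s.erase v, G.degreeIn (s.erase v) w + 2 * G.degreeIn s v := by
  have hdeg : ∀ w ∈ s.erase v,
      G.degreeIn s w = G.degreeIn (s.erase v) w + if G.Adj w v then 1 else 0 := by
    intro w _
    unfold degreeIn
    conv_lhs => rw [← insert_erase hv, filter_insert]
    split_ifs with h
    · rw [card_insert_of_notMem (by simp)]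
    · rfl
  have hback : ∑ w ∈ s.erase v, (if G.Adj w v then 1 else 0) = G.degreeIn s v := by
    rw [sum_boole, Nat.cast_id, degreeIn]
    congr 1
    ext w
    simp only [mem_filter, mem_erase]
    exact ⟨fun ⟨⟨_, hw⟩, h⟩ => ⟨hw, h.symm⟩, fun ⟨hw, h⟩ => ⟨⟨h.ne', hw⟩, h.symm⟩⟩
  rw [← add_sum_erase s _ hv, sum_congr rfl hdeg, sum_add_distrib, hback]
  ring

lemma exists_isPathIn_of_le_two_mul_degreeIn {s : Finset V} {k : ℕ} (hs : k < #s)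
    (hdeg : ∀ v ∈ s, k ≤ 2 * G.degreeIn s v)
    (hconn : ∀ A ⊆ s, A.Nonempty → A ≠ s → ∃ a ∈ A, ∃ b ∈ s, G.Adj a b ∧ b ∉ A) :
    ∃ f, G.IsPathIn s k f := by
  classical
  by_contra! hk
  obtain ⟨v₀, hv₀⟩ : s.Nonempty := card_pos.1 (by omega)
  have h0 : ∃ f, G.IsPathIn s 0 f :=
    ⟨fun _ => v₀, ⟨fun _ _ => hv₀, fun _ _ _ _ _ => by omega, fun _ h => absurd h (Nat.not_lt_zero _)⟩⟩
  set l := Nat.findGreatest (fun m => ∃ f, G.IsPathIn s m f) k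
  obtain ⟨f, hf⟩ : ∃ f, G.IsPathIn s l f :=
    Nat.findGreatest_spec (P := fun m => ∃ f, G.IsPathIn s m f) (Nat.zero_le k) h0
  have hlk : l < k := (Nat.findGreatest_le k).lt_of_ne fun h => hk f (h ▸ hf)
  have hmax : ∀ g, ¬ G.IsPathIn s (l + 1) g := fun g hg =>
    Nat.findGreatest_is_greatest (Nat.lt_succ_self l) hlk ⟨g, hg⟩
  obtain ⟨i, hi, hi0, hil⟩ := hf.exists_crossover hmax (by
    have := hdeg _ (hf.mem 0 l.zero_le); have := hdeg _ (hf.mem l le_rfl); omega)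
  obtain ⟨c, hc, hclose⟩ := hf.exists_cycle_of_crossover hi hi0 hil
  set A := (range (l + 1)).image c
  have hA : #A = l + 1 := by
    rw [card_image_of_injOn fun a ha b hb h => hc.inj a (by simp at ha; omega) b
      (by simp at hb; omega) h, card_range]
  obtain ⟨_, ha, y, hy, hadj, hyA⟩ := hconn A
    (image_subset_iff.2 fun j hj => hc.mem j (by simp at hj; omega)) (by simp [A])
    (fun h => by rw [h] at hA; omega)
  obtain ⟨q, hq, rfl⟩ := mem_image.1 ha
  obtain ⟨g, hg⟩ := hc.exists_isPathIn_succ_of_cycle hclose hy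
    (fun j hj h => hyA (mem_image.2 ⟨j, mem_range.2 (by omega), h⟩))
    (Nat.lt_succ_iff.1 (mem_range.1 hq)) hadj.symm
  exact hmax g hg

/-- The Erdős–Gallai theorem for paths, in degree-sum form. -/
theorem sum_degreeIn_le_of_forall_not_isPathIn [DecidableEq V] {k : ℕ} (s : Finset V)
    (hs : ∀ f, ¬ G.IsPathIn s k f) : ∑ v ∈ s, G.degreeIn s v ≤ (k - 1) * #s := by
  induction s using Finset.strongInduction with
  | H s ih =>
  by_cases hsmall : #s ≤ k
  · calc ∑ v ∈ s, G.degreeIn s v ≤ ∑ _v ∈ s, (k - 1) :=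
          sum_le_sum fun v hv => by have := G.degreeIn_lt_card hv; omega
      _ = (k - 1) * #s := by rw [sum_const, smul_eq_mul, mul_comm]
  by_cases hlow : ∃ v ∈ s, 2 * G.degreeIn s v < k
  · obtain ⟨v, hv, hvk⟩ := hlow
    have := ih _ (erase_ssubset hv) fun f hf => hs f (hf.mono (erase_subset v s))
    rw [sum_degreeIn_erase hv, ← card_erase_add_one hv, mul_add, mul_one]
    omega
  by_cases hsplit : ∃ C ⊆ s, C.Nonempty ∧ C ≠ s ∧ ∀ a ∈ C, ∀ b ∈ s, G.Adj a b → b ∈ C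
  · obtain ⟨C, hCs, hC, hCne, hcl⟩ := hsplit
    have h1 := ih C (hCs.ssubset_of_ne hCne) fun f hf => hs f (hf.mono hCs)
    have h2 := ih (s \ C) (sdiff_ssubset hCs hC) fun f hf => hs f (hf.mono sdiff_subset)
    rw [sum_degreeIn_eq_add_of_closed hCs hcl, ← card_sdiff_add_card_eq_card hCs, mul_add]
    omega
  push Not at hsmall hlow hsplit
  obtain ⟨f, hf⟩ := exists_isPathIn_of_le_two_mul_degreeIn hsmall hlow hsplit
  exact (hs f hf).elim

section Counting
variable [Fintype V]

lemma triCount_eq_card_cliqueFinset [DecidableEq V] : triCount G = #(G.cliqueFinset 3) := by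
  rw [triCount, ← Set.ncard_coe_finset]
  congr 1
  ext
  simp

variable (G) in
def orderedTriangles : Finset (V × V × V) :=
  {p | G.Adj p.1 p.2.1 ∧ G.Adj p.1 p.2.2 ∧ G.Adj p.2.1 p.2.2}

lemma card_orderedTriangles [DecidableEq V] : #G.orderedTriangles = 6 * #(G.cliqueFinset 3) := by
  rw [card_eq_sum_card_fiberwise (f := fun p => {p.1, p.2.1, p.2.2}) (t := G.cliqueFinset 3)
    fun p hp => by simpa [orderedTriangles, is3Clique_triple_iff] using hp, mul_comm,
    ← smul_eq_mul, ← sum_const]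
  refine sum_congr rfl fun s hs => ?_
  obtain ⟨x, y, z, hxy, hxz, hyz, rfl⟩ := is3Clique_iff.1 (mem_cliqueFinset_iff.1 hs)
  have : {p ∈ G.orderedTriangles | {p.1, p.2.1, p.2.2} = ({x, y, z} : Finset V)} =
      {(x, y, z), (x, z, y), (y, x, z), (y, z, x), (z, x, y), (z, y, x)} := by
    ext ⟨a, b, c⟩
    simp only [orderedTriangles, mem_filter, mem_univ, true_and, mem_insert, mem_singleton,
      Prod.mk.injEq]
    constructor
    · rintro ⟨⟨hab, hac, hbc⟩, h⟩
      have ha : a ∈ ({x, y, z} : Finset V) := h ▸ by simp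
      have hb : b ∈ ({x, y, z} : Finset V) := h ▸ by simp
      have hc : c ∈ ({x, y, z} : Finset V) := h ▸ by simp
      simp only [mem_insert, mem_singleton] at ha hb hc
      rcases ha with rfl | rfl | rfl <;> rcases hb with rfl | rfl | rfl <;>
        rcases hc with rfl | rfl | rfl <;> simp_all
    · rintro (⟨rfl, rfl, rfl⟩ | ⟨rfl, rfl, rfl⟩ | ⟨rfl, rfl, rfl⟩ | ⟨rfl, rfl, rfl⟩ |
        ⟨rfl, rfl, rfl⟩ | ⟨rfl, rfl, rfl⟩) <;>
        refine ⟨by simp_all [adj_comm], Finset.ext fun w => ?_⟩ <;> simp only [mem_insert,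
          mem_singleton] <;> tauto
  rw [this]
  simp [hxy.ne, hxz.ne, hyz.ne, hxy.ne.symm, hxz.ne.symm, hyz.ne.symm]

lemma card_orderedTriangles_eq_sum_degreeIn :
    #G.orderedTriangles = ∑ a, ∑ b ∈ G.neighborFinset a, G.degreeIn (G.neighborFinset a) b := by
  simp only [orderedTriangles, degreeIn, card_filter, ← univ_product_univ, sum_product,
    neighborFinset_eq_filter, sum_filter, ite_and]
  refine sum_congr rfl fun a _ => sum_congr rfl fun b _ => ?_
  split_ifs <;> simp

lemma card_orderedTriangles_eq_sum_card_inter [DecidableEq V] :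
    #G.orderedTriangles =
      ∑ b, ∑ c ∈ G.neighborFinset b, #(G.neighborFinset b ∩ G.neighborFinset c) := by
  simp only [orderedTriangles, card_filter, ← univ_product_univ, sum_product,
    neighborFinset_eq_filter, sum_filter, ← filter_and]
  rw [sum_comm]
  refine sum_congr rfl fun b _ => ?_
  rw [sum_comm]
  refine sum_congr rfl fun c _ => ?_
  split_ifs with h <;> simp [h, adj_comm, ite_and]

lemma sum_sum_neighborFinset_degree :
    ∑ b, ∑ c ∈ G.neighborFinset b, G.degree c = ∑ v, G.degree v ^ 2 := by
  simp only [neighborFinset_eq_filter, sum_filter]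
  rw [sum_comm]
  refine sum_congr rfl fun c _ => ?_
  simp only [adj_comm _ _ c, ← sum_filter, sum_const, ← neighborFinset_eq_filter,
    card_neighborFinset_eq_degree, smul_eq_mul, sq]

lemma two_mul_sum_sq_degree_le [DecidableEq V] :
    2 * ∑ v, G.degree v ^ 2 ≤ 2 * #G.edgeFinset * Fintype.card V + #G.orderedTriangles := by
  have hunion (b c : V) :
      G.degree b + G.degree c ≤ Fintype.card V + #(G.neighborFinset b ∩ G.neighborFinset c) := by
    rw [← card_neighborFinset_eq_degree, ← card_neighborFinset_eq_degree,
      ← card_union_add_card_inter]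
    exact Nat.add_le_add_right (card_le_univ _) _
  calc 2 * ∑ v, G.degree v ^ 2 = ∑ b, ∑ c ∈ G.neighborFinset b, (G.degree b + G.degree c) := by
        simp only [sum_add_distrib, sum_sum_neighborFinset_degree, sum_const,
          card_neighborFinset_eq_degree, smul_eq_mul, sq]
        ring
    _ ≤ ∑ b, ∑ c ∈ G.neighborFinset b,
          (Fintype.card V + #(G.neighborFinset b ∩ G.neighborFinset c)) :=
        sum_le_sum fun b _ => sum_le_sum fun c _ => hunion b c
    _ = 2 * #G.edgeFinset * Fintype.card V + #G.orderedTriangles := by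
        simp only [sum_add_distrib, card_orderedTriangles_eq_sum_card_inter, sum_const,
          card_neighborFinset_eq_degree, smul_eq_mul, ← sum_mul, sum_degrees_eq_twice_card_edges]

/-- The Nordhaus–Stewart inequality `t(G) ≥ e(G) (4 e(G) - n²) / (3 n)`. -/
theorem four_mul_sq_card_edgeFinset_le [DecidableEq V] :
    4 * #G.edgeFinset ^ 2 ≤
      #G.edgeFinset * Fintype.card V ^ 2 + 3 * Fintype.card V * #(G.cliqueFinset 3) := by
  have hcs : (2 * #G.edgeFinset) ^ 2 ≤ Fintype.card V * ∑ v, G.degree v ^ 2 := by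
    simpa [sum_degrees_eq_twice_card_edges] using sq_sum_le_card_mul_sum_sq (s := univ)
      (f := fun v => G.degree v)
  have hlow := Nat.mul_le_mul_left (Fintype.card V) G.two_mul_sum_sq_degree_le
  rw [card_orderedTriangles] at hlow
  nlinarith

theorem three_mul_card_cliqueFinset_le [DecidableEq V] {k : ℕ}
    (hk : ∀ v f, ¬ G.IsPathIn (G.neighborFinset v) k f) :
    3 * #(G.cliqueFinset 3) ≤ (k - 1) * #G.edgeFinset := by
  have := calc 6 * #(G.cliqueFinset 3) = #G.orderedTriangles := G.card_orderedTriangles.symm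
    _ = ∑ a, ∑ b ∈ G.neighborFinset a, G.degreeIn (G.neighborFinset a) b :=
        card_orderedTriangles_eq_sum_degreeIn
    _ ≤ ∑ a, (k - 1) * G.degree a := sum_le_sum fun a _ =>
        card_neighborFinset_eq_degree G a ▸ sum_degreeIn_le_of_forall_not_isPathIn _ (hk a)
    _ = (k - 1) * (2 * #G.edgeFinset) := by rw [← mul_sum, sum_degrees_eq_twice_card_edges]
  linarith

end Counting

end SimpleGraph

theorem suspension_path_upper_general {V : Type*} [Fintype V] (G : SimpleGraph V) (k : ℕ)
    (hk : 3 ≤ k)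
    (hfree : ¬ containsCopy (susp (pathGraph (k + 1))) G) :
    (triCount G : ℝ) ≤ ((k : ℝ) - 1) / 12 * (Fintype.card V : ℝ) ^ 2 +
      ((k : ℝ) - 1) ^ 2 / 12 * (Fintype.card V : ℝ) := by
  classical
  have hupper : 3 * (triCount G : ℝ) ≤ ((k : ℝ) - 1) * #G.edgeFinset := by
    have := G.three_mul_card_cliqueFinset_le fun v f hf => hfree hf.containsCopy_susp
    rw [triCount_eq_card_cliqueFinset, ← Nat.cast_pred (by omega)]
    exact_mod_cast this
  have hlower : 4 * (#G.edgeFinset : ℝ) ^ 2 ≤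
      #G.edgeFinset * (Fintype.card V : ℝ) ^ 2 + 3 * Fintype.card V * triCount G := by
    rw [triCount_eq_card_cliqueFinset]
    exact_mod_cast G.four_mul_sq_card_edgeFinset_le
  have hk1 : (0 : ℝ) ≤ k - 1 := by
    rw [sub_nonneg, Nat.one_le_cast]
    omega
  have h4 : (#G.edgeFinset : ℝ) * (4 * #G.edgeFinset) ≤
      #G.edgeFinset * ((Fintype.card V : ℝ) ^ 2 + (k - 1) * Fintype.card V) := by
    nlinarith
  rcases (Nat.cast_nonneg (α := ℝ) #G.edgeFinset).eq_or_lt with he | he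
  · rw [← he] at hupper
    nlinarith [mul_nonneg hk1 (sq_nonneg (Fintype.card V : ℝ))]
  · nlinarith [le_of_mul_le_mul_left h4 he]

/-- If `G` on `n ≥ k` vertices is `\widehat{P}_k`-free (`k ≥ 3`), then
`t(G) ≤ ((k-1)/12)n² + ((k-1)²/12)n`. -/
theorem suspension_path_upper {V : Type*} [Fintype V] (G : SimpleGraph V) (k : ℕ)
    (hk : 3 ≤ k) (hn : k ≤ Fintype.card V)
    (hfree : ¬ containsCopy (susp (pathGraph (k + 1))) G) :
    (triCount G : ℝ) ≤ ((k : ℝ) - 1) / 12 * (Fintype.card V : ℝ) ^ 2 +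
      ((k : ℝ) - 1) ^ 2 / 12 * (Fintype.card V : ℝ) :=
  suspension_path_upper_general G k hk hfree
end

section
/- If G is a \widehat{P}_3-free graph on n \ge 3 vertices, then t(G) < n^2/8 + 3n. -/
open SimpleGraph

/-!
`G` contains `K₁ ∨ P₃` exactly when some neighbourhood contains a path with three edges. Looking for
such paths inside common neighbourhoods gives the local structure of a `K₁ ∨ P₃`-free graph: the
common neighbourhood of an edge of a `K₄` is the rest of that `K₄` (so two `K₄`s share at most one
vertex); if an edge of a triangle has codegree at least `3`, the other two edges have codegree `1`;
and a triangle lying in no `K₄` has at least two edges of codegree `1`.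

With `e` and `k` the numbers of edges and of `K₄`s: at most `4k` triangles lie in a `K₄`, the others
number at most half the codegree-one edges, which are disjoint from the `6k` edges of `K₄`s; hence
`2t ≤ e + 2k`. Finally `4e + 8k ≤ n² + 17n` by deleting, one at a time, a vertex `u` with
`2 deg u + 4 k(u) ≤ n + 8`, where `k(u) ≤ deg u / 3` counts the `K₄`s through `u`. If there is a
`K₄`, the neighbourhoods of its vertices outside it are disjoint, so one of them has degree at most
`(n + 8) / 4`; otherwise a vertex of degree at most `(n + 8) / 2` exists, since else any two vertices
would have nine common neighbours, impossible for two edges of a triangle.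
-/

open Finset

section

variable {V : Type*} {G : SimpleGraph V}

lemma containsCopy_iff_isContained {W : Type*} {H : SimpleGraph W} :
    containsCopy H G ↔ H ⊑ G :=
  ⟨fun ⟨f, hf⟩ => ⟨f.toCopy hf⟩, fun ⟨f⟩ => ⟨f.toHom, f.injective⟩⟩

lemma susp_isContained {W : Type*} {H : SimpleGraph W} (f : Copy H G) {v : V}
    (hv : ∀ w, G.Adj v (f w)) : susp H ⊑ G := by
  refine ⟨⟨⟨fun o => o.elim v f, ?_⟩, ?_⟩⟩
  · rintro (_ | x) (_ | y) h
    · exact h.elim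
    · exact hv y
    · exact (hv x).symm
    · exact f.toHom.map_adj h
  · rintro (_ | x) (_ | y) h
    · rfl
    · exact ((hv y).ne h).elim
    · exact ((hv x).ne h.symm).elim
    · exact congrArg some (f.injective h)

lemma susp_pathGraph_four_isContained {v a b c d : V}
    (hva : G.Adj v a) (hvb : G.Adj v b) (hvc : G.Adj v c) (hvd : G.Adj v d)
    (hab : G.Adj a b) (hbc : G.Adj b c) (hcd : G.Adj c d)
    (hac : a ≠ c) (had : a ≠ d) (hbd : b ≠ d) : susp (pathGraph 4) ⊑ G := by
  have hpath : ∀ {i j}, (pathGraph 4).Adj i j → G.Adj (![a, b, c, d] i) (![a, b, c, d] j) := by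
    intro i j h
    fin_cases i <;> fin_cases j <;> simp_all [pathGraph_adj, G.adj_comm]
  have hinj : Function.Injective ![a, b, c, d] := by
    intro i j h
    fin_cases i <;> fin_cases j <;>
      simp_all [hab.ne, hbc.ne, hcd.ne, hab.ne', hbc.ne', hcd.ne', hac.symm, had.symm, hbd.symm]
  exact susp_isContained ⟨⟨_, hpath⟩, hinj⟩ (v := v) (by intro i; fin_cases i <;> assumption)

lemma codeg_eq_ncard_commonNeighbors (a b : V) : codeg G a b = (G.commonNeighbors a b).ncard :=
  rfl

section DecidableEq

variable [DecidableEq V]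

lemma isNClique_two_pair {u v : V} (h : G.Adj u v) : G.IsNClique 2 {u, v} :=
  ⟨by rw [coe_pair]; exact isClique_pair.mpr fun _ => h, card_pair h.ne⟩

lemma commonNeighbors_eq_sdiff_of_isNClique_four {K : Finset V} {u v : V}
    (hG : (susp (pathGraph 4)).Free G) (hK : G.IsNClique 4 K) (hu : u ∈ K) (hv : v ∈ K)
    (huv : u ≠ v) : G.commonNeighbors u v = ↑(K \ {u, v}) := by
  ext z
  simp only [mem_commonNeighbors, coe_sdiff, Set.mem_sdiff, mem_coe, coe_insert, coe_singleton,
    Set.mem_insert_iff, Set.mem_singleton_iff, not_or]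
  constructor
  · rintro ⟨huz, hvz⟩
    refine ⟨?_, huz.ne', hvz.ne'⟩
    by_contra hzK
    have hcard : #(K \ {u, v}) = 2 := by
      rw [card_sdiff_of_subset (insert_subset hu (singleton_subset_iff.mpr hv)), hK.card_eq,
        card_pair huv]
    obtain ⟨c, d, hcd, hKcd⟩ := card_eq_two.mp hcard
    have hc : c ∈ K \ {u, v} := by simp [hKcd]
    have hd : d ∈ K \ {u, v} := by simp [hKcd]
    simp only [mem_sdiff, mem_insert, mem_singleton, not_or] at hc hd
    exact hG (susp_pathGraph_four_isContained huz (hK.1 hu hv huv) (hK.1 hu hc.1 (Ne.symm hc.2.1))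
      (hK.1 hu hd.1 (Ne.symm hd.2.1)) hvz.symm (hK.1 hv hc.1 (Ne.symm hc.2.2)) (hK.1 hc.1 hd.1 hcd)
      (fun h => hzK (h ▸ hc.1)) (fun h => hzK (h ▸ hd.1)) (Ne.symm hd.2.2))
  · rintro ⟨hzK, hzu, hzv⟩
    exact ⟨hK.1 hu hzK (Ne.symm hzu), hK.1 hv hzK (Ne.symm hzv)⟩

lemma codeg_eq_two_of_isNClique_four {K : Finset V} {u v : V}
    (hG : (susp (pathGraph 4)).Free G) (hK : G.IsNClique 4 K) (hu : u ∈ K) (hv : v ∈ K)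
    (huv : u ≠ v) : codeg G u v = 2 := by
  rw [codeg_eq_ncard_commonNeighbors, commonNeighbors_eq_sdiff_of_isNClique_four hG hK hu hv huv,
    Set.ncard_coe_finset, card_sdiff_of_subset (insert_subset hu (singleton_subset_iff.mpr hv)),
    hK.card_eq, card_pair huv]

lemma eq_of_isNClique_four_of_mem {K K' : Finset V} {u v : V}
    (hG : (susp (pathGraph 4)).Free G) (hK : G.IsNClique 4 K) (hK' : G.IsNClique 4 K')
    (hu : u ∈ K) (hv : v ∈ K) (hu' : u ∈ K') (hv' : v ∈ K') (huv : u ≠ v) : K = K' := by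
  have hsdiff : K \ {u, v} = K' \ {u, v} := coe_injective <| by
    rw [← commonNeighbors_eq_sdiff_of_isNClique_four hG hK hu hv huv,
      commonNeighbors_eq_sdiff_of_isNClique_four hG hK' hu' hv' huv]
  calc K = K \ {u, v} ∪ {u, v} := (sdiff_union_of_subset (insert_subset hu (by simpa))).symm
    _ = K' \ {u, v} ∪ {u, v} := by rw [hsdiff]
    _ = K' := sdiff_union_of_subset (insert_subset hu' (by simpa))

lemma card_filter_subset_eq_erase_add (𝒜 : Finset (Finset V)) (s : Finset V) (u : V) :
    #{A ∈ 𝒜 | A ⊆ s} = #{A ∈ 𝒜 | A ⊆ s.erase u} + #{A ∈ 𝒜 | A ⊆ s ∧ u ∈ A} := by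
  rw [← card_filter_add_card_filter_not (s := {A ∈ 𝒜 | A ⊆ s}) (fun A => u ∈ A), add_comm]
  simp only [filter_filter, subset_erase]

variable [DecidableRel G.Adj]

lemma card_filter_adj_le_one_of_notMem {K : Finset V} {z : V}
    (hG : (susp (pathGraph 4)).Free G) (hK : G.IsNClique 4 K) (hz : z ∉ K) :
    #{x ∈ K | G.Adj x z} ≤ 1 := by
  refine card_le_one.mpr fun x hx y hy => by_contra fun hxy => hz ?_
  simp only [mem_filter] at hx hy
  have hmem : z ∈ G.commonNeighbors x y := G.mem_commonNeighbors.mpr ⟨hx.2, hy.2⟩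
  rw [commonNeighbors_eq_sdiff_of_isNClique_four hG hK hx.1 hy.1 hxy] at hmem
  exact (mem_sdiff.mp hmem).1

lemma exists_four_mul_card_adj_le_of_isNClique_four {s K : Finset V}
    (hG : (susp (pathGraph 4)).Free G) (hK : G.IsNClique 4 K) (hKs : K ⊆ s) :
    ∃ x ∈ K, 4 * #{v ∈ s | G.Adj x v} ≤ #s + 8 := by
  have hsum : ∑ x ∈ K, #{v ∈ s | G.Adj x v} ≤ #s + 8 := by
    have h4 : 4 ≤ #s := hK.card_eq ▸ card_le_card hKs
    calc ∑ x ∈ K, #{v ∈ s | G.Adj x v} = ∑ z ∈ s, #{x ∈ K | G.Adj x z} :=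
          sum_card_bipartiteAbove_eq_sum_card_bipartiteBelow _
      _ = ∑ z ∈ s \ K, #{x ∈ K | G.Adj x z} + ∑ z ∈ K, #{x ∈ K | G.Adj x z} :=
          (sum_sdiff hKs).symm
      _ ≤ ∑ z ∈ s \ K, 1 + ∑ z ∈ K, 3 := by
          gcongr with z hz z hz
          · exact card_filter_adj_le_one_of_notMem hG hK (mem_sdiff.mp hz).2
          · calc #{x ∈ K | G.Adj x z} ≤ #(K.erase z) :=
                  card_le_card fun x hx => by
                    simp only [mem_filter] at hx; exact mem_erase.mpr ⟨hx.2.ne, hx.1⟩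
              _ = 3 := by rw [card_erase_of_mem hz, hK.card_eq]
      _ = #s + 8 := by
          simp only [sum_const, card_sdiff_of_subset hKs, hK.card_eq, smul_eq_mul]
          omega
  refine exists_le_of_sum_le (card_pos.mp (by rw [hK.card_eq]; norm_num)) ?_
  rw [← mul_sum, sum_const, hK.card_eq, smul_eq_mul]
  omega

end DecidableEq

section Fintype

variable [Fintype V]

lemma one_le_codeg {a b c : V} (hac : G.Adj a c) (hbc : G.Adj b c) : 1 ≤ codeg G a b :=
  (Set.ncard_pos).mpr ⟨c, hac, hbc⟩

lemma codeg_eq_one_of_three_le_codeg {u v w : V} (hG : (susp (pathGraph 4)).Free G)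
    (huv : G.Adj u v) (huw : G.Adj u w) (hvw : G.Adj v w) (h : 3 ≤ codeg G v w) :
    codeg G u v = 1 := by
  refine le_antisymm (not_lt.mp fun h2 => ?_) (one_le_codeg huw hvw)
  obtain ⟨x, ⟨hux, hvx⟩, hxw⟩ := Set.exists_ne_of_one_lt_ncard h2 w
  have hlt : ({u, x} : Set V).ncard < codeg G v w := (Set.ncard_insert_le _ _).trans_lt (by simpa)
  obtain ⟨p, ⟨hvp, hwp⟩, hpux⟩ := Set.exists_mem_notMem_of_ncard_lt_ncard hlt
  simp only [Set.mem_insert_iff, Set.mem_singleton_iff, not_or] at hpux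
  exact hG (susp_pathGraph_four_isContained hvx huv.symm hvw hvp hux.symm huw hwp hxw
    (Ne.symm hpux.2) (Ne.symm hpux.1))

lemma codeg_eq_one_or_codeg_eq_one {a b c : V} (hG : (susp (pathGraph 4)).Free G)
    (hab : G.Adj a b) (hbc : G.Adj b c) (hac : G.Adj a c)
    (hK : ∀ x, G.Adj a x → G.Adj b x → ¬ G.Adj c x) :
    codeg G a b = 1 ∨ codeg G b c = 1 := by
  have hab1 := one_le_codeg hac hbc
  have hbc1 := one_le_codeg hab.symm hac.symm
  by_contra! h
  obtain ⟨x, ⟨hax, hbx⟩, hxc⟩ := Set.exists_ne_of_one_lt_ncard (by omega : 1 < codeg G a b) c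
  obtain ⟨y, ⟨hby, hcy⟩, hya⟩ := Set.exists_ne_of_one_lt_ncard (by omega : 1 < codeg G b c) a
  obtain rfl | hxy := eq_or_ne x y
  · exact hK x hax hbx hcy
  · exact hG (susp_pathGraph_four_isContained hbx hab.symm hbc hby hax.symm hac hcy hxc hxy
      (Ne.symm hya))

variable [DecidableRel G.Adj]

lemma codeg_eq_card (u v : V) : codeg G u v = #{w | G.Adj u w ∧ G.Adj v w} := by
  rw [codeg, ← Set.ncard_coe_finset]
  congr 1
  ext w
  simp

variable [DecidableEq V]

lemma card_filter_pair_subset_le_codeg {u v : V} (huv : u ≠ v) :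
    #{T ∈ G.cliqueFinset 3 | {u, v} ⊆ T} ≤ codeg G u v := by
  rw [codeg_eq_card, ← Nat.choose_one_right (#{w | G.Adj u w ∧ G.Adj v w}), ← card_powersetCard]
  -- `T ↦ T \ {u, v}` sends a triangle on `uv` to the singleton of its third vertex.
  refine card_le_card_of_injOn (· \ {u, v}) (fun T hT => ?_) (fun T hT T' hT' h => ?_)
  · simp only [coe_filter, mem_cliqueFinset_iff, Set.mem_ofPred_eq] at hT
    rw [mem_coe, mem_powersetCard, card_sdiff_of_subset hT.2, hT.1.card_eq, card_pair huv]
    refine ⟨fun w hw => ?_, rfl⟩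
    simp only [mem_sdiff, mem_insert, mem_singleton, not_or] at hw
    simp [hT.1.1 (hT.2 (mem_insert_self u {v})) hw.1 (Ne.symm hw.2.1),
      hT.1.1 (hT.2 (by simp)) hw.1 (Ne.symm hw.2.2)]
  · simp only [coe_filter, Set.mem_ofPred_eq] at hT hT'
    rw [← sdiff_union_of_subset hT.2, ← sdiff_union_of_subset hT'.2]
    exact congrArg (· ∪ {u, v}) h

variable (G) in
noncomputable def codegOneEdges : Finset (Finset V) :=
  {e ∈ G.cliqueFinset 2 | ∃ u v, e = {u, v} ∧ codeg G u v = 1}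

lemma pair_mem_codegOneEdges {u v : V} (huv : G.Adj u v) (h : codeg G u v = 1) :
    {u, v} ∈ codegOneEdges G := by
  simp only [codegOneEdges, mem_filter, mem_cliqueFinset_iff]
  exact ⟨isNClique_two_pair huv, u, v, rfl, h⟩

lemma two_le_card_filter_codegOneEdges_subset {T : Finset V} (hG : (susp (pathGraph 4)).Free G)
    (hT : G.IsNClique 3 T) (hTK : ∀ K, G.IsNClique 4 K → ¬ T ⊆ K) :
    2 ≤ #{e ∈ codegOneEdges G | e ⊆ T} := by
  obtain ⟨a, b, c, hab, hac, hbc, rfl⟩ := is3Clique_iff.mp hT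
  have hK : ∀ x, G.Adj a x → G.Adj b x → G.Adj c x → False := fun x ha hb hc =>
    hTK _ (hT.insert (by simp [ha.symm, hb.symm, hc.symm])) (subset_insert x _)
  have h₁ := codeg_eq_one_or_codeg_eq_one hG hab hbc hac hK
  have h₂ := codeg_eq_one_or_codeg_eq_one hG hbc hac.symm hab.symm fun x hb hc ha => hK x ha hb hc
  have h₃ := codeg_eq_one_or_codeg_eq_one hG hac.symm hab hbc.symm fun x hc ha hb => hK x ha hb hc
  have mem : ∀ {x y}, G.Adj x y → codeg G x y = 1 → x ∈ ({a, b, c} : Finset V) →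
      y ∈ ({a, b, c} : Finset V) → {x, y} ∈ {e ∈ codegOneEdges G | e ⊆ {a, b, c}} :=
    fun hxy h hx hy => mem_filter.mpr
      ⟨pair_mem_codegOneEdges hxy h, insert_subset hx (singleton_subset_iff.mpr hy)⟩
  refine one_lt_card.mpr ?_
  by_cases hab₁ : codeg G a b = 1
  · rcases h₂ with hbc₁ | hca₁
    · exact ⟨_, mem hab hab₁ (by simp) (by simp), _, mem hbc hbc₁ (by simp) (by simp),
        ne_of_mem_of_not_mem' (mem_insert_self a _) (by simp [hab.ne, hac.ne])⟩
    · exact ⟨_, mem hab hab₁ (by simp) (by simp), _, mem hac.symm hca₁ (by simp) (by simp),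
        ne_of_mem_of_not_mem' (mem_insert_of_mem (mem_singleton_self b))
          (by simp [hab.ne', hbc.ne])⟩
  · exact ⟨_, mem hbc (h₁.resolve_left hab₁) (by simp) (by simp), _,
      mem hac.symm (h₃.resolve_right hab₁) (by simp) (by simp),
      ne_of_mem_of_not_mem' (mem_insert_self b _) (by simp [hab.ne', hbc.ne])⟩

lemma card_filter_subset_isNClique_four_le :
    #{T ∈ G.cliqueFinset 3 | ∃ K ∈ G.cliqueFinset 4, T ⊆ K} ≤ 4 * #(G.cliqueFinset 4) := by
  have := card_mul_le_card_mul' (fun K T => T ⊆ K) (n := 1) (m := 4)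
    (s := G.cliqueFinset 4) (t := {T ∈ G.cliqueFinset 3 | ∃ K ∈ G.cliqueFinset 4, T ⊆ K})
    (fun T hT => by
      obtain ⟨K, hK, hTK⟩ := (mem_filter.mp hT).2
      exact one_le_card.mpr ⟨K, (mem_bipartiteBelow _).mpr ⟨hK, hTK⟩⟩)
    (fun K hK => by
      refine (card_le_card fun T hT => ?_).trans (card_powersetCard 3 K).le |>.trans_eq ?_
      · simp only [mem_bipartiteAbove, mem_filter, mem_cliqueFinset_iff] at hT
        exact mem_powersetCard.mpr ⟨hT.2, hT.1.1.card_eq⟩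
      · rw [(mem_cliqueFinset_iff.mp hK).card_eq]; rfl)
  omega

lemma two_mul_card_le_card_codegOneEdges (hG : (susp (pathGraph 4)).Free G) :
    2 * #{T ∈ G.cliqueFinset 3 | ¬∃ K ∈ G.cliqueFinset 4, T ⊆ K} ≤ #(codegOneEdges G) := by
  have := card_mul_le_card_mul (fun T e => e ⊆ T) (m := 2) (n := 1)
    (s := {T ∈ G.cliqueFinset 3 | ¬∃ K ∈ G.cliqueFinset 4, T ⊆ K}) (t := codegOneEdges G)
    (fun T hT => by
      simp only [mem_filter, mem_cliqueFinset_iff, not_exists, not_and] at hT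
      exact two_le_card_filter_codegOneEdges_subset hG hT.1 hT.2)
    (fun e he => by
      obtain ⟨he₂, u, v, rfl, h⟩ := mem_filter.mp he
      have huv : u ≠ v := by rintro rfl; simpa using (mem_cliqueFinset_iff.mp he₂).card_eq
      refine (card_le_card fun T hT => ?_).trans ((card_filter_pair_subset_le_codeg huv).trans h.le)
      simp only [mem_bipartiteBelow, mem_filter] at hT ⊢
      exact ⟨hT.1.1, hT.2⟩)
  omega

lemma card_codegOneEdges_add_six_mul_le (hG : (susp (pathGraph 4)).Free G) :
    #(codegOneEdges G) + 6 * #(G.cliqueFinset 4) ≤ #(G.cliqueFinset 2) := by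
  have := card_mul_le_card_mul (fun K e => e ⊆ K) (m := 6) (n := 1)
    (s := G.cliqueFinset 4) (t := G.cliqueFinset 2 \ codegOneEdges G)
    (fun K hK => by
      rw [mem_cliqueFinset_iff] at hK
      refine le_of_eq_of_le ?_ (card_le_card (s := K.powersetCard 2) fun e he => ?_)
      · rw [card_powersetCard, hK.card_eq]; rfl
      obtain ⟨heK, he⟩ := mem_powersetCard.mp he
      refine (mem_bipartiteAbove _).mpr ⟨mem_sdiff.mpr ⟨mem_cliqueFinset_iff.mpr
        ⟨hK.1.subset (coe_subset.mpr heK), he⟩, fun he₁ => ?_⟩, heK⟩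
      obtain ⟨-, u, v, rfl, h⟩ := mem_filter.mp he₁
      have huv : u ≠ v := by rintro rfl; simp at he
      rw [codeg_eq_two_of_isNClique_four hG hK (heK (by simp)) (heK (by simp)) huv] at h
      omega)
    (fun e he => by
      obtain ⟨u, v, huv, rfl⟩ :=
        card_eq_two.mp (mem_cliqueFinset_iff.mp (mem_sdiff.mp he).1).card_eq
      refine card_le_one.mpr fun K hK K' hK' => ?_
      simp only [mem_bipartiteBelow, mem_cliqueFinset_iff] at hK hK'
      exact eq_of_isNClique_four_of_mem hG hK.1 hK'.1 (hK.2 (by simp)) (hK.2 (by simp))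
        (hK'.2 (by simp)) (hK'.2 (by simp)) huv)
  have hsub : codegOneEdges G ⊆ G.cliqueFinset 2 := filter_subset _ _
  have hsplit := card_sdiff_add_card_eq_card hsub
  omega

lemma two_mul_card_cliqueFinset_three_le (hG : (susp (pathGraph 4)).Free G) :
    2 * #(G.cliqueFinset 3) ≤ #(G.cliqueFinset 2) + 2 * #(G.cliqueFinset 4) := by
  have hsplit := card_filter_add_card_filter_not (s := G.cliqueFinset 3)
    (fun T => ∃ K ∈ G.cliqueFinset 4, T ⊆ K)
  have := card_filter_subset_isNClique_four_le (G := G)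
  have := two_mul_card_le_card_codegOneEdges hG
  have := card_codegOneEdges_add_six_mul_le hG
  omega

lemma three_mul_card_le_card_adj {s : Finset V} {x : V} (hG : (susp (pathGraph 4)).Free G) :
    3 * #{K ∈ G.cliqueFinset 4 | K ⊆ s ∧ x ∈ K} ≤ #{v ∈ s | G.Adj x v} := by
  have := card_mul_le_card_mul (fun K z => z ∈ K) (m := 3) (n := 1)
    (s := {K ∈ G.cliqueFinset 4 | K ⊆ s ∧ x ∈ K}) (t := {v ∈ s | G.Adj x v})
    (fun K hK => by
      simp only [mem_filter, mem_cliqueFinset_iff] at hK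
      obtain ⟨hK, hKs, hx⟩ := hK
      refine le_of_eq_of_le ?_ (card_le_card (s := K.erase x) fun z hz => ?_)
      · rw [card_erase_of_mem hx, hK.card_eq]
      obtain ⟨hzx, hz⟩ := mem_erase.mp hz
      exact (mem_bipartiteAbove _).mpr ⟨mem_filter.mpr ⟨hKs hz, hK.1 hx hz hzx.symm⟩, hz⟩)
    (fun z hz => by
      refine card_le_one.mpr fun K hK K' hK' => ?_
      simp only [mem_bipartiteBelow, mem_filter, mem_cliqueFinset_iff] at hK hK' hz
      exact eq_of_isNClique_four_of_mem hG hK.1.1 hK'.1.1 hK.1.2.2 hK.2 hK'.1.2.2 hK'.2 hz.2.ne)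
  omega

lemma exists_two_mul_card_adj_le {s : Finset V} (hG : (susp (pathGraph 4)).Free G)
    (hs : s.Nonempty) : ∃ u ∈ s, 2 * #{v ∈ s | G.Adj u v} ≤ #s + 8 := by
  by_contra! hdeg
  have hinter : ∀ a ∈ s, ∀ b ∈ s, 8 < #({x ∈ s | G.Adj a x} ∩ {x ∈ s | G.Adj b x}) := by
    intro a ha b hb
    have := card_union_add_card_inter {x ∈ s | G.Adj a x} {x ∈ s | G.Adj b x}
    have : #({x ∈ s | G.Adj a x} ∪ {x ∈ s | G.Adj b x}) ≤ #s :=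
      card_le_card (union_subset (filter_subset _ _) (filter_subset _ _))
    have := hdeg a ha
    have := hdeg b hb
    omega
  have hcodeg : ∀ a ∈ s, ∀ b ∈ s, 8 < codeg G a b := by
    intro a ha b hb
    rw [codeg_eq_card]
    refine (hinter a ha b hb).trans_le (card_le_card fun x hx => ?_)
    simp only [mem_inter, mem_filter] at hx ⊢
    exact ⟨mem_univ x, hx.1.2, hx.2.2⟩
  obtain ⟨u, hu⟩ := hs
  obtain ⟨v, hv⟩ := card_pos.mp (by have := hdeg u hu; omega : 0 < #{v ∈ s | G.Adj u v})
  rw [mem_filter] at hv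
  obtain ⟨w, hw⟩ := card_pos.mp ((Nat.zero_le _).trans_lt (hinter u hu v hv.1))
  simp only [mem_inter, mem_filter] at hw
  have := codeg_eq_one_of_three_le_codeg hG hv.2 hw.1.2 hw.2.2
    (by have := hcodeg v hv.1 w hw.1.1; omega)
  have := hcodeg u hu v hv.1
  omega

lemma exists_two_mul_card_adj_add_four_mul_le {s : Finset V} (hG : (susp (pathGraph 4)).Free G)
    (hs : s.Nonempty) :
    ∃ u ∈ s, 2 * #{v ∈ s | G.Adj u v} + 4 * #{K ∈ G.cliqueFinset 4 | K ⊆ s ∧ u ∈ K} ≤ #s + 8 := by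
  by_cases hK : ∃ K ∈ G.cliqueFinset 4, K ⊆ s
  · obtain ⟨K, hK, hKs⟩ := hK
    obtain ⟨x, hx, hdeg⟩ :=
      exists_four_mul_card_adj_le_of_isNClique_four hG (mem_cliqueFinset_iff.mp hK) hKs
    have := three_mul_card_le_card_adj (s := s) (x := x) hG
    exact ⟨x, hKs hx, by omega⟩
  · obtain ⟨u, hu, hdeg⟩ := exists_two_mul_card_adj_le hG hs
    refine ⟨u, hu, ?_⟩
    rw [filter_false_of_mem fun K hK' hKs => hK ⟨K, hK', hKs.1⟩]
    simpa using hdeg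

lemma card_filter_cliqueFinset_two_mem_eq {s : Finset V} {u : V} (hu : u ∈ s) :
    #{e ∈ G.cliqueFinset 2 | e ⊆ s ∧ u ∈ e} = #{v ∈ s | G.Adj u v} := by
  symm
  refine card_nbij (fun v => {u, v}) (fun v hv => ?_) (fun v hv w hw h => ?_) (fun e he => ?_)
  · simp only [coe_filter, Set.mem_ofPred_eq, mem_cliqueFinset_iff] at hv ⊢
    exact ⟨isNClique_two_pair hv.2, insert_subset hu (singleton_subset_iff.mpr hv.1),
      mem_insert_self u _⟩
  · simp only [coe_filter, Set.mem_ofPred_eq] at hv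
    have hvw : v ∈ ({u, w} : Finset V) := (show ({u, v} : Finset V) = {u, w} from h) ▸
      mem_insert_of_mem (mem_singleton_self v)
    simpa [hv.2.ne'] using hvw
  · simp only [coe_filter, Set.mem_ofPred_eq, mem_cliqueFinset_iff] at he
    obtain ⟨⟨hclique, hcard⟩, hes, hue⟩ := he
    obtain ⟨a, b, hab, rfl⟩ := card_eq_two.mp hcard
    have hadj : G.Adj a b := hclique (by simp) (by simp) hab
    rcases mem_insert.mp hue with rfl | hub
    · exact ⟨b, by simpa using ⟨hes (by simp), hadj⟩, rfl⟩
    rw [mem_singleton.mp hub]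
    exact ⟨a, by simpa using ⟨hes (by simp), hadj.symm⟩, pair_comm _ _⟩

lemma four_mul_card_cliqueFinset_two_add_eight_mul_le (hG : (susp (pathGraph 4)).Free G)
    (s : Finset V) :
    4 * #{e ∈ G.cliqueFinset 2 | e ⊆ s} + 8 * #{K ∈ G.cliqueFinset 4 | K ⊆ s} ≤
      #s ^ 2 + 17 * #s := by
  induction s using Finset.strongInduction with
  | H s ih =>
  obtain rfl | hs := s.eq_empty_or_nonempty
  · simp [subset_empty, imp_not_comm]
  obtain ⟨u, hu, hdeg⟩ := exists_two_mul_card_adj_add_four_mul_le hG hs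
  have hih := ih (s.erase u) (erase_ssubset hu)
  have hcard : #(s.erase u) + 1 = #s := card_erase_add_one hu
  rw [card_filter_subset_eq_erase_add _ s u, card_filter_subset_eq_erase_add (G.cliqueFinset 4) s u,
    card_filter_cliqueFinset_two_mem_eq hu, ← hcard]
  nlinarith

lemma eight_mul_card_cliqueFinset_three_le (hG : (susp (pathGraph 4)).Free G) :
    8 * #(G.cliqueFinset 3) ≤ Fintype.card V ^ 2 + 17 * Fintype.card V := by
  have := two_mul_card_cliqueFinset_three_le hG
  have := four_mul_card_cliqueFinset_two_add_eight_mul_le hG univ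
  simp only [subset_univ, filter_true, card_univ] at this
  omega

end Fintype

end

/-- If `G` is `\widehat{P}_3`-free on `n ≥ 3` vertices, then `t(G) < n²/8 + 3n`. -/
theorem suspension_P3_upper {V : Type*} [Fintype V] (G : SimpleGraph V)
    (hn : 3 ≤ Fintype.card V)
    (hfree : ¬ containsCopy (susp (pathGraph 4)) G) :
    (triCount G : ℝ) < (Fintype.card V : ℝ) ^ 2 / 8 + 3 * (Fintype.card V : ℝ) := by
  classical
  have hG : (susp (pathGraph 4)).Free G := fun h => hfree (containsCopy_iff_isContained.mpr h)
  have htri : triCount G = #(G.cliqueFinset 3) := by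
    rw [triCount, ← Set.ncard_coe_finset, coe_cliqueFinset]; rfl
  have hbound : 8 * triCount G < Fintype.card V ^ 2 + 24 * Fintype.card V := by
    have := eight_mul_card_cliqueFinset_three_le hG
    omega
  have : (8 * triCount G : ℝ) < Fintype.card V ^ 2 + 24 * Fintype.card V := by exact_mod_cast hbound
  linarith
end

section
/- Let G be a graph with no copy of \widehat{P}_5 and suppose every edge of a subgraph H \subseteq G has codegree at least 2 in H. If x is a vertex of H whose neighborhood in H contains a path a-b-c-d-e with 4 edges, then every common neighbor of a and x in H lies in {b, c, d, e}. -/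
open SimpleGraph

/-! If `w` were a common neighbour of `a` and `x` outside `{b, c, d, e}`, then `w-a-b-c-d-e`
would be a path with 5 edges inside `N_G(x)`, which together with `x` is a copy of
`\widehat{P}_5` in `G`. -/

namespace SimpleGraph

variable {V W : Type*} {G : SimpleGraph V}

theorem containsCopy_susp_of_copy {H : SimpleGraph W} (f : Copy H G) (x : V)
    (hx : ∀ w, G.Adj x (f w)) : containsCopy (susp H) G := by
  refine ⟨⟨fun o => o.elim x f, ?_⟩, ?_⟩
  · rintro (_ | u) (_ | v) huv
    exacts [huv.elim, hx v, (hx u).symm, f.toHom.map_adj huv]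
  · rintro (_ | u) (_ | v) huv
    · rfl
    · exact absurd huv (hx v).ne
    · exact absurd huv.symm (hx u).ne
    · exact congrArg some (f.injective huv)

theorem Walk.IsPath.containsCopy_susp_pathGraph {u v : V} {p : G.Walk u v} (hp : p.IsPath)
    (x : V) (hx : ∀ y ∈ p.support, G.Adj x y) :
    containsCopy (susp (pathGraph (p.length + 1))) G := by
  classical
  exact containsCopy_susp_of_copy hp.pathGraphCopy x fun n => hx _ (List.getElem_mem _)

end SimpleGraph

theorem common_neighbor_in_path_general {V : Type*} (G H : SimpleGraph V)
    (hHG : H ≤ G)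
    (hP5 : ¬ containsCopy (susp (pathGraph 6)) G)
    (x a b c d e : V) (hnodup : ([a, b, c, d, e] : List V).Nodup)
    (hxa : H.Adj x a) (hxb : H.Adj x b) (hxc : H.Adj x c) (hxd : H.Adj x d)
    (hxe : H.Adj x e)
    (hab : H.Adj a b) (hbc : H.Adj b c) (hcd : H.Adj c d) (hde : H.Adj d e) :
    ∀ w : V, H.Adj a w → H.Adj x w → w ∈ ({b, c, d, e} : Set V) := by
  intro w haw hxw
  by_contra hw
  let p : G.Walk w e :=
    .cons (hHG haw.symm) <| .cons (hHG hab) <| .cons (hHG hbc) <| .cons (hHG hcd) <|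
      .cons (hHG hde) .nil
  have hp : p.IsPath := by
    have hwa : w ≠ a := haw.ne'
    simp only [Set.mem_insert_iff, Set.mem_singleton_iff, not_or] at hw
    rw [Walk.isPath_def]
    simp_all [p]
  have hx : ∀ y ∈ p.support, G.Adj x y := by
    simp only [p, Walk.support_cons, Walk.support_nil, List.mem_cons, List.not_mem_nil, or_false]
    rintro y (rfl | rfl | rfl | rfl | rfl | rfl) <;> apply hHG <;> assumption
  exact hP5 (hp.containsCopy_susp_pathGraph x hx)

/-- Key local observation: in a subgraph `H` of a `\widehat{P}_5`-free graph `G`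
all of whose edges have codegree at least 2, if `N_H(x)` contains a 4-edge path
`a-b-c-d-e`, then every common neighbour of `a` and `x` lies in `{b, c, d, e}`. -/
theorem common_neighbor_in_path {V : Type*} [Fintype V] (G H : SimpleGraph V)
    (hHG : H ≤ G)
    (hP5 : ¬ containsCopy (susp (pathGraph 6)) G)
    (hcod : ∀ u w : V, H.Adj u w → 2 ≤ codeg H u w)
    (x a b c d e : V) (hnodup : ([a, b, c, d, e] : List V).Nodup)
    (hxa : H.Adj x a) (hxb : H.Adj x b) (hxc : H.Adj x c) (hxd : H.Adj x d)
    (hxe : H.Adj x e)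
    (hab : H.Adj a b) (hbc : H.Adj b c) (hcd : H.Adj c d) (hde : H.Adj d e) :
    ∀ w : V, H.Adj a w → H.Adj x w → w ∈ ({b, c, d, e} : Set V) :=
  common_neighbor_in_path_general G H hHG hP5 x a b c d e hnodup hxa hxb hxc hxd hxe hab hbc hcd hde
end
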